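/- If ‖P_Ω P_T‖ ≤ √ρ + δ and ‖P_{Ω⊥} P_T‖ ≤ √(1−ρ) + δ with 0 < ρ < 1, √ρ + δ < 1, then the operator R = P_{T⊥} Σ_{k≥1} (P_Ω P_T P_Ω)^k satisfies ‖R‖ ≤ ((√(1−ρ)+δ)(√ρ+δ)) / (1 − (√ρ+δ)²). -/

import Mathlib

/-!
Write `A = P_Ω P_T P_Ω`. Since `P_T` is idempotent, `A = (P_Ω P_T)(P_Ω P_T)*`, so `‖A‖ = ‖P_Ω P_T‖² < 1`,
and `(1 - P_T) P_T = 0` gives `(1 - P_T) A = -(1 - P_T)(P_{Ω⊥} P_T)(P_T P_Ω)`, of norm at most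
`‖P_{Ω⊥} P_T‖ ‖P_Ω P_T‖`. Then `R = Σ_k ((1 - P_T) A) A^k` is bounded termwise by a geometric series.
-/

section NormedRing

variable {R : Type*} [NormedRing R]

lemma norm_mul_pow_le (x a : R) (k : ℕ) : ‖x * a ^ k‖ ≤ ‖x‖ * ‖a‖ ^ k := by
  induction k with
  | zero => simp
  | succ k ih =>
    rw [pow_succ, ← mul_assoc, pow_succ, ← mul_assoc]
    exact (norm_mul_le _ _).trans (by gcongr)

lemma norm_mul_tsum_pow_succ_le [CompleteSpace R] {a b : R} {r c : ℝ} (ha : ‖a‖ ≤ r)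
    (hr : r < 1) (hba : ‖b * a‖ ≤ c) : ‖b * ∑' k : ℕ, a ^ (k + 1)‖ ≤ c / (1 - r) := by
  have hr0 : 0 ≤ r := (norm_nonneg a).trans ha
  have hsum : Summable fun k : ℕ => a ^ (k + 1) := by
    simpa only [pow_succ'] using (summable_geometric_of_norm_lt_one (ha.trans_lt hr)).mul_left a
  have hc0 : 0 ≤ c := (norm_nonneg _).trans hba
  rw [← hsum.tsum_mul_left, div_eq_mul_inv]
  refine tsum_of_norm_bounded ((hasSum_geometric_of_lt_one hr0 hr).mul_left c) fun k => ?_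
  calc ‖b * a ^ (k + 1)‖ = ‖b * a * a ^ k‖ := by rw [pow_succ', mul_assoc]
    _ ≤ ‖b * a‖ * ‖a‖ ^ k := norm_mul_pow_le _ _ _
    _ ≤ c * r ^ k := by gcongr

end NormedRing

namespace IsStarProjection

variable {A : Type*} [NormedRing A] [StarRing A] [CStarRing A] {p q : A}

lemma norm_mul_comm (hp : IsStarProjection p) (hq : IsStarProjection q) :
    ‖p * q‖ = ‖q * p‖ := by
  rw [← norm_star, star_mul, hp.isSelfAdjoint.star_eq, hq.isSelfAdjoint.star_eq]

lemma norm_mul_mul_eq_norm_mul_sq (hp : IsStarProjection p) (hq : IsStarProjection q) :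
    ‖q * (p * q)‖ = ‖q * p‖ ^ 2 := by
  have : q * (p * q) = q * p * star (q * p) := by
    rw [star_mul, hp.isSelfAdjoint.star_eq, hq.isSelfAdjoint.star_eq, mul_assoc,
      ← mul_assoc p, hp.isIdempotentElem.eq]
  rw [this, CStarRing.norm_self_mul_star, sq]

lemma norm_one_sub_mul_mul_mul_le (hp : IsStarProjection p) (hq : IsStarProjection q) :
    ‖(1 - p) * (q * (p * q))‖ ≤ ‖(1 - q) * p‖ * ‖q * p‖ := by
  have key : (1 - p) * (q * (p * q)) = -((1 - p) * ((1 - q) * p) * (p * q)) := by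
    have h : (1 - p) * ((1 - q) * p) * (p * q) =
        (1 - p) * p * (p * q) - (1 - p) * (q * (p * p * q)) := by
      noncomm_ring
    rw [h, hp.one_sub_mul_self, hp.isIdempotentElem.eq]
    noncomm_ring
  calc ‖(1 - p) * (q * (p * q))‖ = ‖(1 - p) * ((1 - q) * p) * (p * q)‖ := by rw [key, norm_neg]
    _ ≤ ‖1 - p‖ * ‖(1 - q) * p‖ * ‖p * q‖ := norm_mul₃_le
    _ ≤ 1 * ‖(1 - q) * p‖ * ‖q * p‖ := by
      rw [hp.norm_mul_comm hq]
      gcongr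
      exact hp.one_sub.norm_le
    _ = ‖(1 - q) * p‖ * ‖q * p‖ := by rw [one_mul]

end IsStarProjection

theorem opNorm_R_le_of_bounds_general
    {E : Type*} [NormedAddCommGroup E] [InnerProductSpace ℝ E]
    [FiniteDimensional ℝ E]
    (Ω T : Submodule ℝ E)
    (PΩ PT : E →L[ℝ] E)
    (hPΩ : PΩ = Ω.subtypeL.comp Ω.orthogonalProjectionOnto)
    (hPT : PT = T.subtypeL.comp T.orthogonalProjectionOnto)
    (ρ δ : ℝ)
    (hlt : Real.sqrt ρ + δ < 1)
    (h1 : ‖PΩ.comp PT‖ ≤ Real.sqrt ρ + δ)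
    (h2 : ‖(1 - PΩ).comp PT‖ ≤ Real.sqrt (1 - ρ) + δ)
    (R : E →L[ℝ] E)
    (hR : R = (1 - PT).comp (∑' k : ℕ, (PΩ.comp (PT.comp PΩ)) ^ (k + 1))) :
    ‖R‖ ≤ ((Real.sqrt (1 - ρ) + δ) * (Real.sqrt ρ + δ)) /
      (1 - (Real.sqrt ρ + δ) ^ 2) := by
  have hΩ : IsStarProjection PΩ := hPΩ ▸ isStarProjection_starProjection (U := Ω)
  have hT : IsStarProjection PT := hPT ▸ isStarProjection_starProjection (U := T)
  have hΩT : ‖PΩ * PT‖ ≤ √ρ + δ := h1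
  have hΩ'T : ‖(1 - PΩ) * PT‖ ≤ √(1 - ρ) + δ := h2
  have hsq : (√ρ + δ) ^ 2 < 1 := pow_lt_one₀ ((norm_nonneg _).trans hΩT) hlt two_ne_zero
  subst hR
  refine norm_mul_tsum_pow_succ_le (b := 1 - PT) ?_ hsq ?_
  · change ‖PΩ * (PT * PΩ)‖ ≤ _
    rw [hT.norm_mul_mul_eq_norm_mul_sq hΩ]
    gcongr
  · exact (hT.norm_one_sub_mul_mul_mul_le hΩ).trans
      (mul_le_mul hΩ'T hΩT (norm_nonneg _) ((norm_nonneg _).trans hΩ'T))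

theorem opNorm_R_le_of_bounds
    {E : Type*} [NormedAddCommGroup E] [InnerProductSpace ℝ E]
    [FiniteDimensional ℝ E]
    (Ω T : Submodule ℝ E)
    (PΩ PT : E →L[ℝ] E)
    (hPΩ : PΩ = Ω.subtypeL.comp Ω.orthogonalProjectionOnto)
    (hPT : PT = T.subtypeL.comp T.orthogonalProjectionOnto)
    (ρ δ : ℝ) (hρ : ρ ∈ Set.Ioo (0:ℝ) 1) (hδ : 0 < δ)
    (hlt : Real.sqrt ρ + δ < 1)
    (h1 : ‖PΩ.comp PT‖ ≤ Real.sqrt ρ + δ)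
    (h2 : ‖(1 - PΩ).comp PT‖ ≤ Real.sqrt (1 - ρ) + δ)
    (R : E →L[ℝ] E)
    (hR : R = (1 - PT).comp (∑' k : ℕ, (PΩ.comp (PT.comp PΩ)) ^ (k + 1))) :
    ‖R‖ ≤ ((Real.sqrt (1 - ρ) + δ) * (Real.sqrt ρ + δ)) /
      (1 - (Real.sqrt ρ + δ) ^ 2) :=
  opNorm_R_le_of_bounds_general Ω T PΩ PT hPΩ hPT ρ δ hlt h1 h2 R hR
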